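/- Let L, T > 0, Ω = (-L/2, L/2) × (0, T), v > 0, Λ ≥ 1, and let μ be a finite nonnegative Borel measure on [1, Λ]. Then for every g ∈ L²(Ω; ℝ), the function λ ↦ T_g(v,λ) belongs to L²([1,Λ], μ) and satisfies ‖T_g(v,·)‖_{L²([1,Λ],μ)} ≤ ‖g‖_{L²(Ω)} · (L/(2v))^{1/2} · μ([1,Λ])^{1/2}; in particular g ↦ T_g(v,·) is a bounded linear operator from L²(Ω) into L²([1,Λ], μ). -/

import Mathlib

/-!
For `|λ| ≥ 1` and `z > 0` the kernel satisfies `|e^{-λ² v z} e^{-iλvx}| ≤ e^{-vz}`, so by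
Cauchy–Schwarz `|T_g(v,λ)|² ≤ ‖g‖²_{L²(Ω)} ∫_Ω e^{-2vz} ≤ ‖g‖²_{L²(Ω)} · L/(2v)` uniformly in `λ`.
Integrating this bound against `μ` over `[1, Λ]` gives the estimate; the transform is continuous in
`λ` by dominated convergence, hence measurable.
-/

open MeasureTheory Complex Set

/-- Michell-type transform of a function `g` on the rectangle `Ω`. -/
noncomputable def michellTransform (L T v lam : ℝ) (g : ℝ × ℝ → ℝ) : ℂ :=
  ∫ p in (Ioo (-L/2) (L/2)) ×ˢ (Ioo (0:ℝ) T),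
    (g p : ℂ) * Complex.exp (-(lam^2 * v * p.2 : ℝ)) *
      Complex.exp (-(Complex.I * lam * v * p.1))

instance isFiniteMeasure_restrict_Ioo_prod_Ioo (a b c d : ℝ) :
    IsFiniteMeasure (volume.restrict (Ioo a b ×ˢ Ioo c d)) :=
  isFiniteMeasure_restrict.mpr
    ((Metric.isBounded_Ioo a b).prod (Metric.isBounded_Ioo c d)).measure_lt_top.ne

theorem norm_michellIntegrand (a lam v x z : ℝ) :
    ‖(a : ℂ) * Complex.exp (-(lam ^ 2 * v * z : ℝ)) * Complex.exp (-(I * lam * v * x))‖ =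
      |a| * Real.exp (-(lam ^ 2 * v * z)) := by
  rw [norm_mul, norm_mul, norm_real, Real.norm_eq_abs, ← ofReal_neg, norm_exp_ofReal,
    norm_exp]
  simp

theorem norm_exp_neg_mul_le_one {v z : ℝ} (hv : 0 ≤ v) (hz : 0 ≤ z) :
    ‖Real.exp (-(v * z))‖ ≤ 1 := by
  rw [Real.norm_of_nonneg (Real.exp_pos _).le, Real.exp_le_one_iff, neg_nonpos]
  exact mul_nonneg hv hz

theorem setIntegral_Ioo_prod_Ioo_exp_neg_le {a b c T : ℝ} (hab : a ≤ b) (hc : 0 < c) :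
    ∫ p in Ioo a b ×ˢ Ioo 0 T, Real.exp (-(c * p.2)) ≤ (b - a) / c := by
  have hsplit := setIntegral_prod_mul (μ := volume) (ν := volume) (fun _ : ℝ => (1 : ℝ))
    (fun z => Real.exp (-(c * z))) (Ioo a b) (Ioo 0 T)
  simp only [one_mul, ← Measure.volume_eq_prod] at hsplit
  have htail : ∫ z in Ioo 0 T, Real.exp (-(c * z)) ≤ ∫ z in Ioi 0, Real.exp (-(c * z)) := by
    refine setIntegral_mono_set ?_ (.of_forall fun z => (Real.exp_pos _).le)
      Ioo_subset_Ioi_self.eventuallyLE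
    simpa [neg_mul] using exp_neg_integrableOn_Ioi 0 hc
  have hIoi : ∫ z in Ioi 0, Real.exp (-(c * z)) = 1 / c := by
    simpa [neg_mul, neg_div_neg_eq] using integral_exp_mul_Ioi (neg_lt_zero.mpr hc) 0
  rw [hsplit, integral_const, measureReal_restrict_apply_univ, Real.volume_real_Ioo_of_le hab,
    smul_eq_mul, mul_one, div_eq_mul_one_div, ← hIoi]
  exact mul_le_mul_of_nonneg_left htail (sub_nonneg.mpr hab)

theorem sq_integral_mul_le_integral_sq_mul_integral_sq {α : Type*} [MeasurableSpace α]
    {μ : Measure α} {f g : α → ℝ} (hf₀ : 0 ≤ᵐ[μ] f) (hg₀ : 0 ≤ᵐ[μ] g)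
    (hf : MemLp f 2 μ) (hg : MemLp g 2 μ) :
    (∫ a, f a * g a ∂μ) ^ 2 ≤ (∫ a, f a ^ 2 ∂μ) * ∫ a, g a ^ 2 ∂μ := by
  have h2 : ENNReal.ofReal 2 = 2 := by norm_num
  have holder := integral_mul_le_Lp_mul_Lq_of_nonneg .two_two hf₀ hg₀ (h2 ▸ hf) (h2 ▸ hg)
  simp only [Real.rpow_two] at holder
  have hfg : 0 ≤ ∫ a, f a * g a ∂μ :=
    integral_nonneg_of_ae (by filter_upwards [hf₀, hg₀] with a ha hb using mul_nonneg ha hb)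
  have hf2 : 0 ≤ ∫ a, f a ^ 2 ∂μ := integral_nonneg fun a => sq_nonneg _
  have hg2 : 0 ≤ ∫ a, g a ^ 2 ∂μ := integral_nonneg fun a => sq_nonneg _
  calc (∫ a, f a * g a ∂μ) ^ 2
      ≤ ((∫ a, f a ^ 2 ∂μ) ^ (1 / 2 : ℝ) * (∫ a, g a ^ 2 ∂μ) ^ (1 / 2 : ℝ)) ^ 2 :=
        pow_le_pow_left₀ hfg holder 2
    _ = (∫ a, f a ^ 2 ∂μ) * ∫ a, g a ^ 2 ∂μ := by
        rw [mul_pow, ← Real.sqrt_eq_rpow, ← Real.sqrt_eq_rpow, Real.sq_sqrt hf2, Real.sq_sqrt hg2]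

section
variable {L T v : ℝ} {g : ℝ × ℝ → ℝ}

local notation "Ω" => (SProd.sprod (Ioo (-L/2) (L/2)) (Ioo (0:ℝ) T) : Set (ℝ × ℝ))

theorem continuous_michellTransform (hv : 0 ≤ v) (hg : Integrable g (volume.restrict Ω)) :
    Continuous fun lam => michellTransform L T v lam g := by
  refine continuous_of_dominated (fun lam => ?_) (fun lam => ?_) hg.norm
    (.of_forall fun p => by fun_prop)
  · exact ((continuous_ofReal.comp_aestronglyMeasurable hg.1).mul
      (by fun_prop : Continuous _).aestronglyMeasurable).mul
      (by fun_prop : Continuous _).aestronglyMeasurable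
  · refine ae_restrict_of_forall_mem (measurableSet_Ioo.prod measurableSet_Ioo) fun p hp => ?_
    rw [norm_michellIntegrand, Real.norm_eq_abs]
    refine mul_le_of_le_one_right (abs_nonneg _) (Real.exp_le_one_iff.mpr ?_)
    have : 0 ≤ lam ^ 2 * v * p.2 := by have := hp.2.1; positivity
    linarith

theorem norm_michellTransform_le (hv : 0 ≤ v) {lam : ℝ} (hlam : 1 ≤ lam ^ 2)
    (hg : Integrable g (volume.restrict Ω)) :
    ‖michellTransform L T v lam g‖ ≤ ∫ p in Ω, |g p| * Real.exp (-(v * p.2)) := by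
  have hw : Continuous fun p : ℝ × ℝ => Real.exp (-(v * p.2)) := by fun_prop
  have hΩ : MeasurableSet Ω := measurableSet_Ioo.prod measurableSet_Ioo
  refine norm_integral_le_of_norm_le (hg.abs.mul_bdd hw.aestronglyMeasurable (c := 1) ?_) ?_
  · exact ae_restrict_of_forall_mem hΩ fun p hp => norm_exp_neg_mul_le_one hv hp.2.1.le
  · refine ae_restrict_of_forall_mem hΩ fun p hp => ?_
    rw [norm_michellIntegrand]
    gcongr _ * Real.exp ?_
    nlinarith [mul_nonneg hv hp.2.1.le]

theorem sq_norm_michellTransform_le (hL : 0 ≤ L) (hv : 0 < v) {lam : ℝ} (hlam : 1 ≤ lam ^ 2)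
    (hg : MemLp g 2 (volume.restrict Ω)) :
    ‖michellTransform L T v lam g‖ ^ 2 ≤ (∫ p in Ω, g p ^ 2) * (L / (2 * v)) := by
  have hw : MemLp (fun p : ℝ × ℝ => Real.exp (-(v * p.2))) 2 (volume.restrict Ω) := by
    exact .of_bound (by fun_prop : Continuous _).aestronglyMeasurable 1
      (ae_restrict_of_forall_mem (measurableSet_Ioo.prod measurableSet_Ioo) fun p hp =>
        norm_exp_neg_mul_le_one hv.le hp.2.1.le)
  calc ‖michellTransform L T v lam g‖ ^ 2
      ≤ (∫ p in Ω, |g p| * Real.exp (-(v * p.2))) ^ 2 :=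
        pow_le_pow_left₀ (norm_nonneg _)
          (norm_michellTransform_le hv.le hlam (hg.integrable one_le_two)) 2
    _ ≤ (∫ p in Ω, |g p| ^ 2) * ∫ p in Ω, Real.exp (-(v * p.2)) ^ 2 :=
        sq_integral_mul_le_integral_sq_mul_integral_sq (.of_forall fun p => abs_nonneg _)
          (.of_forall fun p => (Real.exp_pos _).le) hg.abs hw
    _ ≤ (∫ p in Ω, g p ^ 2) * (L / (2 * v)) := by
        have hweight := setIntegral_Ioo_prod_Ioo_exp_neg_le (T := T) (by linarith : -L/2 ≤ L/2)
          (by positivity : 0 < 2 * v)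
        simp only [sq_abs, ← Real.exp_nat_mul, Nat.cast_ofNat, mul_neg, ← mul_assoc]
        rw [show L / 2 - -L / 2 = L by ring] at hweight
        exact mul_le_mul_of_nonneg_left hweight (integral_nonneg fun p => sq_nonneg _)

end

theorem stmt1_general (L T v Λ : ℝ) (hL : 0 < L) (hv : 0 < v)
    (μ : Measure ℝ) [IsFiniteMeasure μ]
    (g : ℝ × ℝ → ℝ)
    (hg : MemLp g 2 (volume.restrict ((Ioo (-L/2) (L/2)) ×ˢ (Ioo (0:ℝ) T)))) :
    MemLp (fun lam => michellTransform L T v lam g) 2 (μ.restrict (Icc 1 Λ)) ∧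
    (∫ lam in Icc 1 Λ, ‖michellTransform L T v lam g‖ ^ 2 ∂μ) ≤
      (∫ p in (Ioo (-L/2) (L/2)) ×ˢ (Ioo (0:ℝ) T), (g p)^2) * (L / (2 * v)) *
        (μ (Icc 1 Λ)).toReal := by
  set C := (∫ p in (Ioo (-L/2) (L/2)) ×ˢ (Ioo (0:ℝ) T), (g p)^2) * (L / (2 * v))
  have hcont := continuous_michellTransform hv.le (hg.integrable one_le_two)
  have hbound : ∀ lam ∈ Icc 1 Λ, ‖michellTransform L T v lam g‖ ^ 2 ≤ C := fun lam hlam =>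
    sq_norm_michellTransform_le hL.le hv (one_le_pow₀ hlam.1) hg
  refine ⟨.of_bound hcont.aestronglyMeasurable √C (ae_restrict_of_forall_mem measurableSet_Icc
    fun lam hlam => Real.le_sqrt_of_sq_le (hbound lam hlam)), ?_⟩
  calc ∫ lam in Icc 1 Λ, ‖michellTransform L T v lam g‖ ^ 2 ∂μ
      ≤ ∫ _ in Icc 1 Λ, C ∂μ := setIntegral_mono_on
        ((continuous_norm.comp hcont).pow 2).integrableOn_Icc (integrable_const _)
        measurableSet_Icc hbound
    _ = C * (μ (Icc 1 Λ)).toReal := by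
      rw [setIntegral_const, smul_eq_mul, mul_comm, measureReal_def]

theorem stmt1 (L T v Λ : ℝ) (hL : 0 < L) (hT : 0 < T) (hv : 0 < v) (hΛ : 1 ≤ Λ)
    (μ : Measure ℝ) [IsFiniteMeasure μ]
    (g : ℝ × ℝ → ℝ)
    (hg : MemLp g 2 (volume.restrict ((Ioo (-L/2) (L/2)) ×ˢ (Ioo (0:ℝ) T)))) :
    MemLp (fun lam => michellTransform L T v lam g) 2 (μ.restrict (Icc 1 Λ)) ∧
    (∫ lam in Icc 1 Λ, ‖michellTransform L T v lam g‖ ^ 2 ∂μ) ≤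
      (∫ p in (Ioo (-L/2) (L/2)) ×ˢ (Ioo (0:ℝ) T), (g p)^2) * (L / (2 * v)) *
        (μ (Icc 1 Λ)).toReal :=
  stmt1_general L T v Λ hL hv μ g hg
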